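/- Self-stabilization of Algorithm 1: starting from an arbitrary state s_0, every maximal execution of Algorithm 1 (an execution s_0, …, s_T whose final state admits no move, i.e., no vertex is Forbidden in s_T) terminates in a state s_T in which D(s_T) = {v | s_T(v) = true} is a minimal dominating set of G, and T ≤ n where n is the number of vertices of G. -/

import Mathlib

/-!
Call a vertex settled when it is IN with no IN neighbour, or OUT with an IN neighbour. A settled
vertex is never unsatisfied, and no move can unsettle it: a moving neighbour would have to be
unsatisfied, and when a Removable neighbour leaves, the vertex keeps another IN neighbour. The
moving vertex itself is unsatisfied before the move and settled after it. Hence every move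
strictly enlarges the set of settled vertices, which bounds the number of moves by `n`. In a
final state no vertex is unsatisfied, since the unsatisfied vertex of largest `id` would be
forbidden; no Addable vertex means domination and no Removable vertex means minimality.
-/

variable {V : Type*} [Fintype V] [DecidableEq V]

/-- `i` is IN and every vertex of its closed neighborhood is dominated even without `i`. -/
def Removable (G : SimpleGraph V) (s : V → Bool) (i : V) : Prop :=
  s i = true ∧ ∀ j, (j = i ∨ G.Adj i j) →
    ((j ≠ i ∧ s j = true) ∨ ∃ k, G.Adj j k ∧ k ≠ i ∧ s k = true)

/-- `i` is OUT and all its neighbors are OUT. -/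
def Addable (G : SimpleGraph V) (s : V → Bool) (i : V) : Prop :=
  s i = false ∧ ∀ j, G.Adj i j → s j = false

def Unsatisfied (G : SimpleGraph V) (s : V → Bool) (i : V) : Prop :=
  Removable G s i ∨ Addable G s i

/-- `j ≠ i` is within two hops of `i`. -/
def Adj2 (G : SimpleGraph V) (i j : V) : Prop :=
  j ≠ i ∧ (G.Adj i j ∨ ∃ k, G.Adj i k ∧ G.Adj k j)

def Forbidden (G : SimpleGraph V) (id : V → ℕ) (s : V → Bool) (i : V) : Prop :=
  Unsatisfied G s i ∧ ∀ j, Adj2 G i j → (¬ Unsatisfied G s j ∨ id i > id j)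

/-- One step of Algorithm 1: a forbidden node flips its state, all others unchanged. -/
def Move (G : SimpleGraph V) (id : V → ℕ) (s s' : V → Bool) : Prop :=
  ∃ i, Forbidden G id s i ∧ s' i = !(s i) ∧ ∀ j, j ≠ i → s' j = s j

/-- `D` is a dominating set of `G`. -/
def IsDomSet (G : SimpleGraph V) (D : Set V) : Prop :=
  ∀ v : V, v ∈ D ∨ ∃ u ∈ D, G.Adj v u

section

variable {V : Type*}

def Settled (G : SimpleGraph V) (s : V → Bool) (i : V) : Prop :=
  (s i = true ∧ ∀ j, G.Adj i j → s j = false) ∨ (s i = false ∧ ∃ k, G.Adj i k ∧ s k = true)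

variable {G : SimpleGraph V} {id : V → ℕ} {s s' : V → Bool} {i : V}

theorem Settled.not_unsatisfied (h : Settled G s i) : ¬ Unsatisfied G s i := by
  rcases h with ⟨hi, hnb⟩ | ⟨hi, k, hk, hks⟩
  · rintro (⟨_, hdom⟩ | ⟨hf, _⟩)
    · rcases hdom i (Or.inl rfl) with ⟨hne, _⟩ | ⟨k, hk, -, hks⟩
      · exact hne rfl
      · simp [hnb k hk] at hks
    · simp [hi] at hf
  · rintro (⟨ht, _⟩ | ⟨_, hnb⟩)
    · simp [hi] at ht
    · simp [hnb k hk] at hks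

theorem Forbidden.settled_of_flip (hforb : Forbidden G id s i) (hflip : s' i = !(s i))
    (hrest : ∀ j, j ≠ i → s' j = s j) : Settled G s' i := by
  rcases hforb.1 with ⟨ht, hdom⟩ | ⟨hf, hnb⟩
  · right
    refine ⟨by simp [hflip, ht], ?_⟩
    rcases hdom i (Or.inl rfl) with ⟨hne, _⟩ | ⟨k, hk, hki, hks⟩
    · exact (hne rfl).elim
    · exact ⟨k, hk, by rw [hrest k hki, hks]⟩
  · left
    refine ⟨by simp [hflip, hf], fun j hj => ?_⟩
    rw [hrest j hj.ne', hnb j hj]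

theorem Settled.of_move (hm : Move G id s s') (h : Settled G s i) : Settled G s' i := by
  obtain ⟨m, hforb, -, hrest⟩ := hm
  have hmi : m ≠ i := by
    rintro rfl
    exact h.not_unsatisfied hforb.1
  have hsi : s' i = s i := hrest i hmi.symm
  rcases h with ⟨hi, hnb⟩ | ⟨hi, k, hk, hks⟩
  · left
    refine ⟨by rw [hsi, hi], fun j hj => ?_⟩
    have hjm : j ≠ m := by
      rintro rfl
      rcases hforb.1 with ⟨ht, _⟩ | ⟨_, hnb'⟩
      · simp [hnb j hj] at ht
      · simp [hnb' i hj.symm] at hi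
    rw [hrest j hjm, hnb j hj]
  · right
    refine ⟨by rw [hsi, hi], ?_⟩
    by_cases hkm : k = m
    · subst hkm
      rcases hforb.1 with ⟨_, hdom⟩ | ⟨hf, _⟩
      · rcases hdom i (Or.inr hk.symm) with ⟨_, ht⟩ | ⟨u, hu, huk, hus⟩
        · simp [hi] at ht
        · exact ⟨u, hu, by rw [hrest u huk, hus]⟩
      · simp [hf] at hks
    · exact ⟨k, hk, by rw [hrest k hkm, hks]⟩

theorem Move.settled_ssubset (hm : Move G id s s') :
    {v | Settled G s v} ⊂ {v | Settled G s' v} := by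
  refine (Set.ssubset_iff_of_subset fun _ => Settled.of_move hm).2 ?_
  obtain ⟨i, hforb, hflip, hrest⟩ := hm
  exact ⟨i, hforb.settled_of_flip hflip hrest, fun h => Settled.not_unsatisfied h hforb.1⟩

theorem exists_forbidden_of_unsatisfied [Finite V] (hid : Function.Injective id)
    (h : Unsatisfied G s i) : ∃ j, Forbidden G id s j := by
  obtain ⟨j, hj, hjmax⟩ :=
    Set.exists_max_image {v | Unsatisfied G s v} id (Set.toFinite _) ⟨i, h⟩
  refine ⟨j, hj, fun k hk => ?_⟩
  by_cases hku : Unsatisfied G s k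
  · exact Or.inr <| (hjmax k hku).lt_of_ne fun e => hk.1 (hid e)
  · exact Or.inl hku

theorem isDomSet_of_forall_not_addable (h : ∀ v, ¬ Addable G s v) :
    IsDomSet G {v | s v = true} := by
  intro v
  cases hv : s v
  · obtain ⟨j, hj, hjs⟩ : ∃ j, G.Adj v j ∧ s j = true := by
      simpa [Addable, hv] using h v
    exact Or.inr ⟨j, hjs, hj⟩
  · exact Or.inl hv

theorem not_isDomSet_diff_of_not_removable (hi : s i = true) (h : ¬ Removable G s i) :
    ¬ IsDomSet G ({v | s v = true} \ {i}) := by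
  intro hdom
  unfold Removable at h
  push Not at h
  obtain ⟨j, -, hjin, hjdom⟩ := h hi
  rcases hdom j with ⟨hjs, hji⟩ | ⟨u, ⟨hus, hui⟩, hu⟩
  · exact hjin hji hjs
  · exact hjdom u hu hui hus

theorem le_ncard_settled [Finite V] {T : ℕ} {seq : ℕ → V → Bool}
    (hexec : ∀ t, t < T → Move G id (seq t) (seq (t + 1))) :
    ∀ t ≤ T, t ≤ {v | Settled G (seq t) v}.ncard
  | 0, _ => Nat.zero_le _
  | t + 1, ht => (le_ncard_settled hexec t (by omega)).trans_lt
      (Set.ncard_lt_ncard (hexec t (by omega)).settled_ssubset)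

end

/-- Self-stabilization: any maximal execution of Algorithm 1, from an arbitrary initial
state, ends in a state whose IN-set is a minimal dominating set, within `|V|` moves. -/
theorem self_stabilization
    (G : SimpleGraph V) (id : V → ℕ) (hid : Function.Injective id)
    (T : ℕ) (seq : ℕ → V → Bool)
    (hexec : ∀ t, t < T → Move G id (seq t) (seq (t + 1)))
    (hmax : ∀ i : V, ¬ Forbidden G id (seq T) i) :
    (IsDomSet G {v | seq T v = true} ∧
      ∀ i ∈ {v | seq T v = true}, ¬ IsDomSet G ({v | seq T v = true} \ {i})) ∧
    T ≤ Fintype.card V := by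
  have hsat : ∀ i, ¬ Unsatisfied G (seq T) i := fun i hi =>
    (exists_forbidden_of_unsatisfied hid hi).elim hmax
  refine ⟨⟨isDomSet_of_forall_not_addable fun v hv => hsat v (Or.inr hv),
    fun i hi => not_isDomSet_diff_of_not_removable hi fun hr => hsat i (Or.inl hr)⟩, ?_⟩
  calc T ≤ {v | Settled G (seq T) v}.ncard := le_ncard_settled hexec T le_rfl
    _ ≤ Nat.card V := Set.ncard_le_card _
    _ = Fintype.card V := Nat.card_eq_fintype_card
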